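/- Under conditional independence of T* and C given Z, the IPCW weight w = 1{T ≤ τ}·δ/(1 - G(T⁻|Z)) + 1{T > τ}/(1 - G(τ|Z)) satisfies E[w] = 1. -/

import Mathlib

/-!
Condition on `Z = z`. Then `T*` and `C` are independent, `C` has law `β_z := condDistrib C Z μ z`,
`G(t|z) = β_z (-∞, t]` and hence `G(t⁻|z) = β_z (-∞, t)`. For a fixed event time `t` the weight
already integrates to one against the censoring law alone: if `t ≤ τ` the weight is
`1{C ≥ t} / β_z [t, ∞)`, and if `t > τ` it is `1{C > τ} / β_z (τ, ∞)`. Integrating next over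
`T*` and then over `Z` gives `E[w] = 1`. The computation is done with `ℝ≥0∞`-valued integrals, so
that no integrability of the (possibly unbounded) weight is needed.
-/

open MeasureTheory ProbabilityTheory Filter Set
open scoped ENNReal Topology

/-- The IPCW weight at `p = (T*, C)` when the censoring law is `β`: on `{T ≤ τ, δ = 1}` it is
`(1 - G(T*⁻))⁻¹`, on `{T > τ}` it is `(1 - G(τ))⁻¹`. -/
noncomputable def ipcwWeight (β : Measure ℝ) (τ : ℝ) (p : ℝ × ℝ) : ℝ≥0∞ :=
  (if p.1 ≤ p.2 ∧ p.1 ≤ τ then (1 - β (Iio p.1))⁻¹ else 0)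
    + (if τ < p.1 ∧ τ < p.2 then (1 - β (Iic τ))⁻¹ else 0)

lemma measurable_ipcwWeight {γ : Type*} [MeasurableSpace γ] (κ : Kernel γ ℝ) [IsSFiniteKernel κ]
    (τ : ℝ) : Measurable fun x : γ × (ℝ × ℝ) => ipcwWeight (κ x.1) τ x.2 := by
  have hIio : Measurable fun x : γ × ℝ => κ x.1 (Iio x.2) :=
    Kernel.measurable_kernel_prodMk_left (κ := Kernel.prodMkRight ℝ κ)
      (measurableSet_lt measurable_snd (measurable_snd.comp measurable_fst))
  have hIio' : Measurable fun x : γ × (ℝ × ℝ) => κ x.1 (Iio x.2.1) :=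
    hIio.comp (measurable_fst.prodMk (measurable_fst.comp measurable_snd))
  have hIic : Measurable fun x : γ × (ℝ × ℝ) => κ x.1 (Iic τ) :=
    (κ.measurable_coe measurableSet_Iic).comp measurable_fst
  have hfirst : MeasurableSet {x : γ × (ℝ × ℝ) | x.2.1 ≤ x.2.2 ∧ x.2.1 ≤ τ} := by
    measurability
  have hsecond : MeasurableSet {x : γ × (ℝ × ℝ) | τ < x.2.1 ∧ τ < x.2.2} := by
    measurability
  unfold ipcwWeight
  exact .add (.ite hfirst (measurable_const.sub hIio').inv measurable_const)
    (.ite hsecond (measurable_const.sub hIic).inv measurable_const)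

lemma inv_one_sub_mul_measure_compl {α : Type*} [MeasurableSpace α] (β : Measure α)
    [IsProbabilityMeasure β] {s : Set α}
    (hs : MeasurableSet s) (h : β s < 1) : (1 - β s)⁻¹ * β sᶜ = 1 := by
  rw [prob_compl_eq_one_sub hs]
  exact ENNReal.inv_mul_cancel (tsub_pos_of_lt h).ne' (ENNReal.sub_ne_top ENNReal.one_ne_top)

lemma lintegral_ipcwWeight_prodMk_left (β : Measure ℝ) [IsProbabilityMeasure β] {τ : ℝ}
    (hβ : β (Iic τ) < 1) (t : ℝ) : ∫⁻ c, ipcwWeight β τ (t, c) ∂β = 1 := by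
  rcases le_or_gt t τ with htτ | hτt
  · have hw : (fun c => ipcwWeight β τ (t, c)) = (Ici t).indicator fun _ => (1 - β (Iio t))⁻¹ := by
      ext c
      by_cases htc : t ≤ c <;> simp [ipcwWeight, htc, htτ, not_lt.2 htτ]
    rw [hw, lintegral_indicator_const measurableSet_Ici, ← compl_Iio]
    exact inv_one_sub_mul_measure_compl β measurableSet_Iio
      ((measure_mono (Iio_subset_Iic_self.trans (Iic_subset_Iic.2 htτ))).trans_lt hβ)
  · have hw : (fun c => ipcwWeight β τ (t, c)) = (Ioi τ).indicator fun _ => (1 - β (Iic τ))⁻¹ := by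
      ext c
      by_cases hτc : τ < c <;> simp [ipcwWeight, hτc, hτt, not_le.2 hτt]
    rw [hw, lintegral_indicator_const measurableSet_Ioi, ← compl_Iic]
    exact inv_one_sub_mul_measure_compl β measurableSet_Iic hβ

lemma lintegral_ipcwWeight_prod (α β : Measure ℝ) [IsProbabilityMeasure α]
    [IsProbabilityMeasure β] {τ : ℝ} (hβ : β (Iic τ) < 1) :
    ∫⁻ p, ipcwWeight β τ p ∂(α.prod β) = 1 := by
  have hmeas : Measurable (ipcwWeight β τ) :=
    (measurable_ipcwWeight (Kernel.const Unit β) τ).comp (measurable_prodMk_left (x := ()))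
  rw [lintegral_prod _ hmeas.aemeasurable]
  simp [lintegral_ipcwWeight_prodMk_left β hβ]

lemma ipcwWeight_toReal (β : Measure ℝ) [IsProbabilityMeasure β] (τ t c : ℝ) :
    (ipcwWeight β τ (t, c)).toReal =
      (if min t c ≤ τ then (if t ≤ c then (1 : ℝ) else 0) / (1 - β.real (Iio (min t c))) else 0)
        + (if τ < min t c then 1 / (1 - β.real (Iic τ)) else 0) := by
  have key (s : Set ℝ) : ((1 - β s)⁻¹).toReal = 1 / (1 - β.real s) := by
    rw [ENNReal.toReal_inv, ENNReal.toReal_sub_of_le prob_le_one ENNReal.one_ne_top,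
      ENNReal.toReal_one, one_div, measureReal_def]
  rcases le_or_gt t c with htc | hct
  · rcases le_or_gt t τ with htτ | hτt
    · simp [ipcwWeight, htc, htτ, not_lt.2 htτ, key]
    · simp [ipcwWeight, htc, hτt, not_le.2 hτt, hτt.trans_le htc, key]
  · rcases le_or_gt c τ with hcτ | hτc
    · simp [ipcwWeight, not_le.2 hct, hcτ, not_lt.2 hcτ, min_eq_right hct.le]
    · simp [ipcwWeight, not_le.2 hct, hτc, min_eq_right hct.le, key, hτc.trans hct]

lemma eq_measureReal_Iio_of_tendsto_nhdsLT (ν : Measure ℝ) [IsFiniteMeasure ν] {g : ℝ → ℝ}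
    (hg : ∀ q : ℚ, g q = ν.real (Iic q)) {t a : ℝ} (h : Tendsto g (𝓝[<] t) (𝓝 a)) :
    a = ν.real (Iio t) := by
  obtain ⟨u, hu_mono, hu_lt, hu_lim⟩ := Real.exists_seq_rat_strictMono_tendsto t
  have hg_lim : Tendsto (fun n => g (u n)) atTop (𝓝 a) :=
    h.comp (tendsto_nhdsWithin_iff.2 ⟨hu_lim, .of_forall hu_lt⟩)
  have hν_lim : Tendsto (fun n => ν.real (Iic (u n : ℝ))) atTop (𝓝 (ν.real (Iio t))) := by
    rw [← iUnion_Iic_eq_Iio_of_lt_of_tendsto hu_lt hu_lim]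
    refine (ENNReal.tendsto_toReal (measure_ne_top _ _)).comp (tendsto_measure_iUnion_atTop ?_)
    exact fun m n hmn => Iic_subset_Iic.2 (Rat.cast_le.2 (hu_mono.monotone hmn))
  simp only [hg] at hg_lim
  exact tendsto_nhds_unique hg_lim hν_lim

lemma lintegral_eq_condDistrib_prod_of_condIndepFun {Ω γ β β' : Type*}
    {mΩ : MeasurableSpace Ω} [StandardBorelSpace Ω] {mγ : MeasurableSpace γ}
    [MeasurableSpace β] [StandardBorelSpace β] [Nonempty β]
    [MeasurableSpace β'] [StandardBorelSpace β'] [Nonempty β']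
    {μ : Measure Ω} [IsFiniteMeasure μ] {Z : Ω → γ} {X : Ω → β} {Y : Ω → β'} (hZ : Measurable Z)
    (hX : Measurable X) (hY : Measurable Y) (hXY : X ⟂ᵢ[Z, hZ; μ] Y)
    {F : γ × β × β' → ℝ≥0∞} (hF : Measurable F) :
    ∫⁻ ω, F (Z ω, X ω, Y ω) ∂μ
      = ∫⁻ ω, ∫⁻ p, F (Z ω, p) ∂((condDistrib X Z μ (Z ω)).prod (condDistrib Y Z μ (Z ω))) ∂μ := by
  rw [← lintegral_map hF (by fun_prop),
    (condIndepFun_iff_map_prod_eq_prod_condDistrib_prod_condDistrib hX hY hZ).1 hXY,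
    ← Measure.compProd_eq_comp_prod, Measure.lintegral_compProd hF,
    lintegral_map (Measurable.lintegral_kernel_prod_right (f := fun z p => F (z, p)) hF) hZ]
  simp_rw [Kernel.prod_apply]

theorem ipcw_weight_mean_one_general
    {Ω : Type*} [mΩ : MeasurableSpace Ω] [StandardBorelSpace Ω]
    (μ : Measure Ω) [IsProbabilityMeasure μ]
    {d : ℕ} (Tstar C : Ω → ℝ) (Z : Ω → (Fin d → ℝ))
    (hT : Measurable Tstar) (hC : Measurable C) (hZ : Measurable Z)
    (hmZ : MeasurableSpace.comap Z inferInstance ≤ mΩ)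
    (hindep : CondIndepFun (MeasurableSpace.comap Z inferInstance) hmZ Tstar C μ)
    (G Gm : ℝ → (Fin d → ℝ) → ℝ)
    (hG : ∀ t : ℝ, (fun ω => G t (Z ω)) =ᵐ[μ]
      μ[Set.indicator {ω | C ω ≤ t} (fun _ => (1 : ℝ)) |
        MeasurableSpace.comap Z inferInstance])
    (hGm : ∀ (t : ℝ) (z : Fin d → ℝ),
      Tendsto (fun s => G s z) (nhdsWithin t (Set.Iio t)) (nhds (Gm t z)))
    (τ : ℝ)
    (hGτ : ∀ᵐ ω ∂μ, G τ (Z ω) < 1) :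
    (∫ ω, ((if min (Tstar ω) (C ω) ≤ τ then
            (if Tstar ω ≤ C ω then (1 : ℝ) else 0) /
              (1 - Gm (min (Tstar ω) (C ω)) (Z ω))
          else 0) +
          (if τ < min (Tstar ω) (C ω) then 1 / (1 - G τ (Z ω)) else 0)) ∂μ) = 1 := by
  set β := condDistrib C Z μ
  have hG_cdf (t : ℝ) : ∀ᵐ ω ∂μ, G t (Z ω) = (β (Z ω)).real (Iic t) := by
    filter_upwards [hG t, condDistrib_ae_eq_condExp hZ hC measurableSet_Iic] with ω h h'
    exact h.trans h'.symm
  have hGm_cdf : ∀ᵐ ω ∂μ, ∀ t, Gm t (Z ω) = (β (Z ω)).real (Iio t) := by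
    filter_upwards [ae_all_iff.2 fun q : ℚ => hG_cdf q] with ω hq t
    exact eq_measureReal_Iio_of_tendsto_nhdsLT _ hq (hGm t (Z ω))
  have hβτ : ∀ᵐ ω ∂μ, β (Z ω) (Iic τ) < 1 := by
    filter_upwards [hG_cdf τ, hGτ] with ω h h'
    rw [h, measureReal_def] at h'
    exact (ENNReal.toReal_lt_toReal (measure_ne_top _ _) ENNReal.one_ne_top).1 (by simpa using h')
  have hmeas : Measurable fun ω => ipcwWeight (β (Z ω)) τ (Tstar ω, C ω) :=
    (measurable_ipcwWeight β τ).comp (hZ.prodMk (hT.prodMk hC))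
  have hmean : ∫⁻ ω, ipcwWeight (β (Z ω)) τ (Tstar ω, C ω) ∂μ = 1 := by
    rw [lintegral_eq_condDistrib_prod_of_condIndepFun hZ hT hC hindep (measurable_ipcwWeight β τ),
      lintegral_congr_ae (hβτ.mono fun ω h => lintegral_ipcwWeight_prod _ _ h)]
    simp
  calc _ = ∫ ω, (ipcwWeight (β (Z ω)) τ (Tstar ω, C ω)).toReal ∂μ := by
        refine integral_congr_ae ?_
        filter_upwards [hGm_cdf, hG_cdf τ] with ω hGm_ω hGτ_ω
        rw [ipcwWeight_toReal, hGm_ω, hGτ_ω]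
    _ = 1 := by
        rw [integral_toReal hmeas.aemeasurable (ae_lt_top hmeas (by simp [hmean])), hmean,
          ENNReal.toReal_one]

/-- **The IPCW weight has expectation 1.**
Under conditional independence of `T*` and `C` given `Z`, the weight
`w = 1{T ≤ τ} δ/(1 - G(T⁻|Z)) + 1{T > τ}/(1 - G(τ|Z))` satisfies `E[w] = 1`. -/
theorem ipcw_weight_mean_one
    {Ω : Type*} [mΩ : MeasurableSpace Ω] [StandardBorelSpace Ω]
    (μ : Measure Ω) [IsProbabilityMeasure μ]
    {d : ℕ} (Tstar C : Ω → ℝ) (Z : Ω → (Fin d → ℝ))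
    (hT : Measurable Tstar) (hC : Measurable C) (hZ : Measurable Z)
    (hmZ : MeasurableSpace.comap Z inferInstance ≤ mΩ)
    (hindep : CondIndepFun (MeasurableSpace.comap Z inferInstance) hmZ Tstar C μ)
    (G Gm : ℝ → (Fin d → ℝ) → ℝ)
    (hG : ∀ t : ℝ, (fun ω => G t (Z ω)) =ᵐ[μ]
      μ[Set.indicator {ω | C ω ≤ t} (fun _ => (1 : ℝ)) |
        MeasurableSpace.comap Z inferInstance])
    (hGm : ∀ (t : ℝ) (z : Fin d → ℝ),
      Tendsto (fun s => G s z) (nhdsWithin t (Set.Iio t)) (nhds (Gm t z)))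
    (τ : ℝ) (hτpos : 0 < τ)
    (hGτ : ∀ᵐ ω ∂μ, G τ (Z ω) < 1) :
    (∫ ω, ((if min (Tstar ω) (C ω) ≤ τ then
            (if Tstar ω ≤ C ω then (1 : ℝ) else 0) /
              (1 - Gm (min (Tstar ω) (C ω)) (Z ω))
          else 0) +
          (if τ < min (Tstar ω) (C ω) then 1 / (1 - G τ (Z ω)) else 0)) ∂μ) = 1 :=
  ipcw_weight_mean_one_general (mΩ := mΩ) μ Tstar C Z hT hC hZ hmZ hindep G Gm hG hGm τ hGτ
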